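/- arXiv:2204.08200 — 3 statements merged into one kernel-verified Lean document; each statement's English description precedes it below -/
import Mathlib

section
/- Let μ and ν be probability measures on ℝ^d × ℝ, let h : ℝ^d → ℝ be R-Lipschitz, and let ℓ : ℝ × ℝ → ℝ be ρ-Lipschitz in each argument, with R ≥ 0 and ρ ≥ 0. Let γ be any coupling of μ and ν, and assume the functions ((x,y),(x',y')) ↦ ℓ(h(x), y), ((x,y),(x',y')) ↦ ℓ(h(x'), y'), and ((x,y),(x',y')) ↦ ‖x − x'‖₂ + |y − y'| are integrable with respect to γ. Then |ε_μ(h) − ε_ν(h)| ≤ ρ·√(R² + 1)·∫ (‖x − x'‖₂ + |y − y'|) dγ((x,y),(x',y')). -/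
/-! Transport the two losses to the coupling `γ`: there the difference of the population losses is
the integral of `ℓ (h x) y - ℓ (h x') y'`, which is pointwise at most
`ρ (R ‖x - x'‖ + |y - y'|) ≤ ρ √(R² + 1) (‖x - x'‖ + |y - y'|)`. -/

open MeasureTheory

/-- The population loss of classifier `h` under loss `ℓ` and distribution `μ`. -/
noncomputable def popLoss {d : ℕ} (ℓ : ℝ → ℝ → ℝ) (h : EuclideanSpace ℝ (Fin d) → ℝ)
    (μ : Measure (EuclideanSpace ℝ (Fin d) × ℝ)) : ℝ :=
  ∫ p, ℓ (h p.1) p.2 ∂μ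

theorem abs_integral_sub_le_of_coupling {α : Type*} [MeasurableSpace α] {μ ν : Measure α}
    {γ : Measure (α × α)} (hγ₁ : γ.map Prod.fst = μ) (hγ₂ : γ.map Prod.snd = ν)
    {f : α → ℝ} {c : α × α → ℝ} (hf : Measurable f)
    (hf₁ : Integrable (fun q => f q.1) γ) (hf₂ : Integrable (fun q => f q.2) γ)
    (hc : Integrable c γ) (hfc : ∀ q, |f q.1 - f q.2| ≤ c q) :
    |∫ x, f x ∂μ - ∫ x, f x ∂ν| ≤ ∫ q, c q ∂γ := by
  rw [← hγ₁, ← hγ₂, integral_map_of_stronglyMeasurable measurable_fst hf.stronglyMeasurable,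
    integral_map_of_stronglyMeasurable measurable_snd hf.stronglyMeasurable,
    ← integral_sub hf₁ hf₂]
  calc |∫ q, (f q.1 - f q.2) ∂γ| ≤ ∫ q, |f q.1 - f q.2| ∂γ := abs_integral_le_integral_abs
    _ ≤ ∫ q, c q ∂γ := integral_mono (hf₁.sub hf₂).abs hc hfc

theorem continuous_uncurry_of_abs_sub_le {f : ℝ → ℝ → ℝ} {ρ : ℝ}
    (h₁ : ∀ y y' z, |f y z - f y' z| ≤ ρ * |y - y'|)
    (h₂ : ∀ y y' z, |f z y - f z y'| ≤ ρ * |y - y'|) :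
    Continuous (Function.uncurry f) :=
  (LipschitzWith.uncurry (fun z => LipschitzWith.of_dist_le' fun y y' => h₁ y y' z)
    (fun z => LipschitzWith.of_dist_le' fun y y' => h₂ y y' z)).continuous

theorem mul_add_le_sqrt_sq_add_one_mul (R : ℝ) {a b : ℝ} (ha : 0 ≤ a) (hb : 0 ≤ b) :
    R * a + b ≤ Real.sqrt (R ^ 2 + 1) * (a + b) := by
  have hR : R ≤ Real.sqrt (R ^ 2 + 1) := (le_abs_self R).trans (Real.abs_le_sqrt (by linarith))
  have h1 : 1 ≤ Real.sqrt (R ^ 2 + 1) := Real.one_le_sqrt.mpr (by nlinarith)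
  nlinarith [mul_le_mul_of_nonneg_right hR ha, mul_le_mul_of_nonneg_right h1 hb]

theorem abs_loss_sub_le {E : Type*} [SeminormedAddCommGroup E] {R ρ : ℝ} (hρ : 0 ≤ ρ)
    {h : E → ℝ} {ℓ : ℝ → ℝ → ℝ}
    (hLip : ∀ x x', |h x - h x'| ≤ R * ‖x - x'‖)
    (hℓ₁ : ∀ y y' z, |ℓ y z - ℓ y' z| ≤ ρ * |y - y'|)
    (hℓ₂ : ∀ y y' z, |ℓ z y - ℓ z y'| ≤ ρ * |y - y'|) (x x' : E) (y y' : ℝ) :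
    |ℓ (h x) y - ℓ (h x') y'| ≤ ρ * Real.sqrt (R ^ 2 + 1) * (‖x - x'‖ + |y - y'|) :=
  calc |ℓ (h x) y - ℓ (h x') y'|
      ≤ |ℓ (h x) y - ℓ (h x') y| + |ℓ (h x') y - ℓ (h x') y'| := abs_sub_le _ _ _
    _ ≤ ρ * |h x - h x'| + ρ * |y - y'| := add_le_add (hℓ₁ _ _ _) (hℓ₂ _ _ _)
    _ ≤ ρ * (R * ‖x - x'‖ + |y - y'|) := by
      rw [mul_add]; gcongr; exact hLip x x'
    _ ≤ ρ * Real.sqrt (R ^ 2 + 1) * (‖x - x'‖ + |y - y'|) := by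
      rw [mul_assoc]; gcongr
      exact mul_add_le_sqrt_sq_add_one_mul R (norm_nonneg _) (abs_nonneg _)

theorem error_difference_coupling_bound_general
    {d : ℕ} (R ρ : ℝ) (hρ : 0 ≤ ρ)
    (μ ν : Measure (EuclideanSpace ℝ (Fin d) × ℝ))
    (h : EuclideanSpace ℝ (Fin d) → ℝ) (ℓ : ℝ → ℝ → ℝ)
    (hLip : ∀ x x' : EuclideanSpace ℝ (Fin d), |h x - h x'| ≤ R * ‖x - x'‖)
    (hℓ₁ : ∀ y y' z : ℝ, |ℓ y z - ℓ y' z| ≤ ρ * |y - y'|)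
    (hℓ₂ : ∀ y y' z : ℝ, |ℓ z y - ℓ z y'| ≤ ρ * |y - y'|)
    (γ : Measure ((EuclideanSpace ℝ (Fin d) × ℝ) × (EuclideanSpace ℝ (Fin d) × ℝ)))
    (hγ₁ : γ.map Prod.fst = μ) (hγ₂ : γ.map Prod.snd = ν)
    (hint₁ : Integrable (fun q => ℓ (h q.1.1) q.1.2) γ)
    (hint₂ : Integrable (fun q => ℓ (h q.2.1) q.2.2) γ)
    (hintc : Integrable (fun q => ‖q.1.1 - q.2.1‖ + |q.1.2 - q.2.2|) γ) :
    |popLoss ℓ h μ - popLoss ℓ h ν| ≤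
      ρ * Real.sqrt (R ^ 2 + 1) * ∫ q, (‖q.1.1 - q.2.1‖ + |q.1.2 - q.2.2|) ∂γ := by
  have hh : Continuous h := (LipschitzWith.of_dist_le' fun x x' => by
    rw [Real.dist_eq, dist_eq_norm]; exact hLip x x').continuous
  have hloss : Measurable fun p : EuclideanSpace ℝ (Fin d) × ℝ => ℓ (h p.1) p.2 :=
    ((continuous_uncurry_of_abs_sub_le hℓ₁ hℓ₂).comp
      ((hh.comp continuous_fst).prodMk continuous_snd)).measurable
  rw [← integral_const_mul]
  exact abs_integral_sub_le_of_coupling hγ₁ hγ₂ hloss hint₁ hint₂ (hintc.const_mul _)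
    fun q => abs_loss_sub_le hρ hLip hℓ₁ hℓ₂ q.1.1 q.2.1 q.1.2 q.2.2

/-- coupling form of Lemma 4.1 (error difference over shifted domains). -/
theorem error_difference_coupling_bound
    {d : ℕ} (R ρ : ℝ) (hR : 0 ≤ R) (hρ : 0 ≤ ρ)
    (μ ν : Measure (EuclideanSpace ℝ (Fin d) × ℝ))
    [IsProbabilityMeasure μ] [IsProbabilityMeasure ν]
    (h : EuclideanSpace ℝ (Fin d) → ℝ) (ℓ : ℝ → ℝ → ℝ)
    (hLip : ∀ x x' : EuclideanSpace ℝ (Fin d), |h x - h x'| ≤ R * ‖x - x'‖)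
    (hℓ₁ : ∀ y y' z : ℝ, |ℓ y z - ℓ y' z| ≤ ρ * |y - y'|)
    (hℓ₂ : ∀ y y' z : ℝ, |ℓ z y - ℓ z y'| ≤ ρ * |y - y'|)
    (γ : Measure ((EuclideanSpace ℝ (Fin d) × ℝ) × (EuclideanSpace ℝ (Fin d) × ℝ)))
    [IsProbabilityMeasure γ]
    (hγ₁ : γ.map Prod.fst = μ) (hγ₂ : γ.map Prod.snd = ν)
    (hint₁ : Integrable (fun q => ℓ (h q.1.1) q.1.2) γ)
    (hint₂ : Integrable (fun q => ℓ (h q.2.1) q.2.2) γ)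
    (hintc : Integrable (fun q => ‖q.1.1 - q.2.1‖ + |q.1.2 - q.2.2|) γ) :
    |popLoss ℓ h μ - popLoss ℓ h ν| ≤
      ρ * Real.sqrt (R ^ 2 + 1) * ∫ q, (‖q.1.1 - q.2.1‖ + |q.1.2 - q.2.2|) ∂γ :=
  error_difference_coupling_bound_general R ρ hρ μ ν h ℓ hLip hℓ₁ hℓ₂ γ hγ₁ hγ₂ hint₁ hint₂ hintc
end

section
/- Let Δ ≥ 0 and n > 0 be reals, define f : (0, ∞) → ℝ by f(T) = Δ·T + T/√n + 1/√(n·T), and set T* = (2·(1 + Δ·√n))^{−2/3}. Then T* is the unique global minimizer of f on (0, ∞): f'(T*) = 0, and for every T > 0 with T ≠ T*, f(T) > f(T*). -/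
/-!
With `a = 1 + Δ √n` one has `√n · f(T) = a T + 1/√T`. Writing `T = t²`, the critical point
`s² = (2a)^(-2/3)` is characterised by `2 a s³ = 1`, and this relation makes the gap
`(a t² + 1/t) - (a s² + 1/s)` factor as `a (t - s)² (t + 2s) / t`, which is positive for `t ≠ s`.
-/

open Real

section CriticalPoint

variable {a s : ℝ}

lemma mul_sq_add_inv_sub_eq {t : ℝ} (hs : s ≠ 0) (ht : t ≠ 0) (hcrit : 2 * a * s ^ 3 = 1) :
    (a * t ^ 2 + t⁻¹) - (a * s ^ 2 + s⁻¹) = a * (t - s) ^ 2 * (t + 2 * s) / t := by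
  field_simp
  linear_combination (t - s) * hcrit

lemma mul_sq_add_inv_lt (ha : 0 < a) (hs : 0 < s) (hcrit : 2 * a * s ^ 3 = 1) {t : ℝ}
    (ht : 0 < t) (hts : t ≠ s) : a * s ^ 2 + s⁻¹ < a * t ^ 2 + t⁻¹ := by
  have hgap : 0 < a * (t - s) ^ 2 * (t + 2 * s) / t := by
    have : 0 < (t - s) ^ 2 := by positivity [sub_ne_zero.mpr hts]
    positivity
  linarith [mul_sq_add_inv_sub_eq hs.ne' ht.ne' hcrit]

lemma mul_add_inv_sqrt_lt (ha : 0 < a) (hs : 0 < s) (hcrit : 2 * a * s ^ 3 = 1) {T : ℝ}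
    (hT : 0 < T) (hTs : T ≠ s ^ 2) : a * s ^ 2 + (√(s ^ 2))⁻¹ < a * T + (√T)⁻¹ := by
  have hsqrt : √T ≠ s := fun h => hTs (by rw [← h, sq_sqrt hT.le])
  rw [sqrt_sq hs.le, ← sq_sqrt hT.le, sqrt_sq (sqrt_nonneg T)]
  exact mul_sq_add_inv_lt ha hs hcrit (sqrt_pos.mpr hT) hsqrt

end CriticalPoint

lemma hasDerivAt_mul_add_inv_sqrt (a : ℝ) {T : ℝ} (hT : 0 < T) :
    HasDerivAt (fun T => a * T + (√T)⁻¹) (a - (2 * T * √T)⁻¹) T := by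
  have hsqrt : √T ≠ 0 := (sqrt_pos.mpr hT).ne'
  refine (((hasDerivAt_id T).const_mul a).add ((hasDerivAt_sqrt hT.ne').inv hsqrt)).congr_deriv ?_
  rw [sq_sqrt hT.le]
  field_simp
  ring

/-- the optimal number of steps T* (Appendix A.5 of the paper). -/
theorem optimal_T_unique_global_minimizer
    (Δ n : ℝ) (hΔ : 0 ≤ Δ) (hn : 0 < n) :
    HasDerivAt (fun T : ℝ => Δ * T + T / Real.sqrt n + 1 / Real.sqrt (n * T)) 0
      ((2 * (1 + Δ * Real.sqrt n)) ^ (-(2 : ℝ) / 3)) ∧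
    ∀ T : ℝ, 0 < T → T ≠ (2 * (1 + Δ * Real.sqrt n)) ^ (-(2 : ℝ) / 3) →
      Δ * ((2 * (1 + Δ * Real.sqrt n)) ^ (-(2 : ℝ) / 3))
        + ((2 * (1 + Δ * Real.sqrt n)) ^ (-(2 : ℝ) / 3)) / Real.sqrt n
        + 1 / Real.sqrt (n * ((2 * (1 + Δ * Real.sqrt n)) ^ (-(2 : ℝ) / 3)))
      < Δ * T + T / Real.sqrt n + 1 / Real.sqrt (n * T) := by
  have hsn : 0 < √n := sqrt_pos.mpr hn
  set a := 1 + Δ * √n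
  have ha : 0 < a := by positivity
  set s := (2 * a) ^ (-(1 : ℝ) / 3)
  have hs : 0 < s := by positivity
  have hTstar : (2 * a) ^ (-(2 : ℝ) / 3) = s ^ 2 := by
    rw [← rpow_natCast, ← rpow_mul (by positivity)]
    norm_num
  have hcrit : 2 * a * s ^ 3 = 1 := by
    rw [← rpow_natCast, ← rpow_mul (by positivity)]
    norm_num [rpow_neg_one]
    field_simp
  have hf (T : ℝ) : Δ * T + T / √n + 1 / √(n * T) = (a * T + (√T)⁻¹) / √n := by
    rw [sqrt_mul hn.le, one_div, mul_inv]
    field_simp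
    ring
  rw [hTstar]
  refine ⟨?_, fun T hT0 hTs => ?_⟩
  · rw [funext hf]
    refine ((hasDerivAt_mul_add_inv_sqrt a (by positivity)).div_const √n).congr_deriv ?_
    rw [sqrt_sq hs.le]
    field_simp
    linear_combination hcrit
  · rw [hf, hf]
    exact div_lt_div_of_pos_right (mul_add_inv_sqrt_lt ha hs hcrit hT0 hTs) hsn
end

section
/- Let T ≥ 1 be an integer, let μ₀, μ₁, …, μ_T be probability measures on ℝ^d × ℝ, let h : ℝ^d → ℝ be R-Lipschitz, and let ℓ : ℝ × ℝ → ℝ be ρ-Lipschitz in each argument, with R ≥ 0, ρ ≥ 0. For each t ∈ {1, …, T}, let γ_t be a coupling of μ_{t−1} and μ_t such that ℓ(h(x), y), ℓ(h(x'), y') and the cost c((x,y),(x',y')) = ‖x − x'‖₂ + |y − y'| are γ_t-integrable. Then |ε_{μ₀}(h) − ε_{μ_T}(h)| ≤ ρ·√(R² + 1)·Σ_{t=1}^T ∫ c dγ_t. -/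
/-!
Along one step of the path, integrating against the coupling γ writes the loss difference as
`∫ (ℓ (h x) y - ℓ (h x') y') dγ`, and the integrand is at most `ρ (R ‖x - x'‖ + |y - y'|)`,
hence at most `ρ √(R² + 1) c`. The triangle inequality along the path adds up the steps.
-/

open MeasureTheory

section Marginals

variable {α Ω E : Type*} [MeasurableSpace α] [MeasurableSpace Ω]
  [NormedAddCommGroup E] [NormedSpace ℝ E] [CompleteSpace E]
  (ρ : Measure (α × Ω)) [IsFiniteMeasure ρ]

/-- `g` need not be measurable, so `integral_map` does not apply; the disintegration of `ρ`
stands in for it. -/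
theorem integral_fst_eq_integral_comp_fst [StandardBorelSpace Ω] [Nonempty Ω] {g : α → E}
    (hg : Integrable (fun q ↦ g q.1) ρ) :
    ∫ x, g x ∂ρ.fst = ∫ q, g q.1 ∂ρ := by
  have hconst : ∀ x, ∫ _, g x ∂ρ.condKernel x = g x := fun x ↦ by simp
  simpa only [hconst] using ρ.integral_condKernel hg

theorem integral_snd_eq_integral_comp_snd [StandardBorelSpace α] [Nonempty α] {g : Ω → E}
    (hg : Integrable (fun q ↦ g q.2) ρ) :
    ∫ x, g x ∂ρ.snd = ∫ q, g q.2 ∂ρ := by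
  have hswap : Integrable (fun q ↦ g q.1) (ρ.map Prod.swap) :=
    (integrable_map_equiv MeasurableEquiv.prodComm _).2 hg
  rw [← Measure.fst_map_swap, integral_fst_eq_integral_comp_fst _ hswap]
  exact integral_map_equiv MeasurableEquiv.prodComm (fun q : Ω × α ↦ g q.1)

end Marginals

theorem abs_loss_sub_le_of_lipschitz {E : Type*} [SeminormedAddCommGroup E] {R ρ : ℝ} (hρ : 0 ≤ ρ)
    {h : E → ℝ} {ℓ : ℝ → ℝ → ℝ}
    (hLip : ∀ x x' : E, |h x - h x'| ≤ R * ‖x - x'‖)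
    (hℓ₁ : ∀ y y' z : ℝ, |ℓ y z - ℓ y' z| ≤ ρ * |y - y'|)
    (hℓ₂ : ∀ y y' z : ℝ, |ℓ z y - ℓ z y'| ≤ ρ * |y - y'|) (x x' : E) (y y' : ℝ) :
    |ℓ (h x) y - ℓ (h x') y'| ≤ ρ * Real.sqrt (R ^ 2 + 1) * (‖x - x'‖ + |y - y'|) := by
  have hR : R ≤ Real.sqrt (R ^ 2 + 1) :=
    (le_abs_self R).trans (Real.abs_le_sqrt (by linarith))
  have h1 : 1 ≤ Real.sqrt (R ^ 2 + 1) := Real.le_sqrt_of_sq_le (by nlinarith)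
  calc |ℓ (h x) y - ℓ (h x') y'|
      ≤ |ℓ (h x) y - ℓ (h x') y| + |ℓ (h x') y - ℓ (h x') y'| := abs_sub_le _ _ _
    _ ≤ ρ * (R * ‖x - x'‖) + ρ * |y - y'| :=
        add_le_add ((hℓ₁ _ _ _).trans (mul_le_mul_of_nonneg_left (hLip x x') hρ)) (hℓ₂ _ _ _)
    _ = ρ * (R * ‖x - x'‖ + 1 * |y - y'|) := by ring
    _ ≤ ρ * (Real.sqrt (R ^ 2 + 1) * ‖x - x'‖ + Real.sqrt (R ^ 2 + 1) * |y - y'|) := by gcongr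
    _ = ρ * Real.sqrt (R ^ 2 + 1) * (‖x - x'‖ + |y - y'|) := by ring

theorem abs_popLoss_sub_le_integral_cost {d : ℕ} {R ρ : ℝ} (hρ : 0 ≤ ρ)
    {h : EuclideanSpace ℝ (Fin d) → ℝ} {ℓ : ℝ → ℝ → ℝ}
    (hLip : ∀ x x' : EuclideanSpace ℝ (Fin d), |h x - h x'| ≤ R * ‖x - x'‖)
    (hℓ₁ : ∀ y y' z : ℝ, |ℓ y z - ℓ y' z| ≤ ρ * |y - y'|)
    (hℓ₂ : ∀ y y' z : ℝ, |ℓ z y - ℓ z y'| ≤ ρ * |y - y'|)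
    (γ : Measure ((EuclideanSpace ℝ (Fin d) × ℝ) × (EuclideanSpace ℝ (Fin d) × ℝ)))
    [IsFiniteMeasure γ]
    (hint₁ : Integrable (fun q ↦ ℓ (h q.1.1) q.1.2) γ)
    (hint₂ : Integrable (fun q ↦ ℓ (h q.2.1) q.2.2) γ)
    (hintc : Integrable (fun q ↦ ‖q.1.1 - q.2.1‖ + |q.1.2 - q.2.2|) γ) :
    |popLoss ℓ h γ.fst - popLoss ℓ h γ.snd| ≤
      ρ * Real.sqrt (R ^ 2 + 1) * ∫ q, (‖q.1.1 - q.2.1‖ + |q.1.2 - q.2.2|) ∂γ := by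
  rw [popLoss, popLoss, integral_fst_eq_integral_comp_fst γ hint₁,
    integral_snd_eq_integral_comp_snd γ hint₂, ← integral_sub hint₁ hint₂,
    ← integral_const_mul]
  exact abs_integral_le_integral_abs.trans <| integral_mono (hint₁.sub hint₂).abs
    (hintc.const_mul _) fun q ↦ abs_loss_sub_le_of_lipschitz hρ hLip hℓ₁ hℓ₂ _ _ _ _

theorem error_difference_telescoped_along_path_general
    {d : ℕ} (T : ℕ) (R ρ : ℝ) (hρ : 0 ≤ ρ)
    (μ : ℕ → Measure (EuclideanSpace ℝ (Fin d) × ℝ))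
    (h : EuclideanSpace ℝ (Fin d) → ℝ) (ℓ : ℝ → ℝ → ℝ)
    (hLip : ∀ x x' : EuclideanSpace ℝ (Fin d), |h x - h x'| ≤ R * ‖x - x'‖)
    (hℓ₁ : ∀ y y' z : ℝ, |ℓ y z - ℓ y' z| ≤ ρ * |y - y'|)
    (hℓ₂ : ∀ y y' z : ℝ, |ℓ z y - ℓ z y'| ≤ ρ * |y - y'|)
    (γ : ℕ → Measure ((EuclideanSpace ℝ (Fin d) × ℝ) × (EuclideanSpace ℝ (Fin d) × ℝ)))
    (hγprob : ∀ t < T, IsProbabilityMeasure (γ t))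
    (hγ₁ : ∀ t < T, (γ t).map Prod.fst = μ t)
    (hγ₂ : ∀ t < T, (γ t).map Prod.snd = μ (t + 1))
    (hint₁ : ∀ t < T, Integrable (fun q => ℓ (h q.1.1) q.1.2) (γ t))
    (hint₂ : ∀ t < T, Integrable (fun q => ℓ (h q.2.1) q.2.2) (γ t))
    (hintc : ∀ t < T, Integrable (fun q => ‖q.1.1 - q.2.1‖ + |q.1.2 - q.2.2|) (γ t)) :
    |popLoss ℓ h (μ 0) - popLoss ℓ h (μ T)| ≤
      ρ * Real.sqrt (R ^ 2 + 1) *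
        ∑ t ∈ Finset.range T, ∫ q, (‖q.1.1 - q.2.1‖ + |q.1.2 - q.2.2|) ∂(γ t) := by
  have step : ∀ t < T, |popLoss ℓ h (μ t) - popLoss ℓ h (μ (t + 1))| ≤
      ρ * Real.sqrt (R ^ 2 + 1) * ∫ q, (‖q.1.1 - q.2.1‖ + |q.1.2 - q.2.2|) ∂(γ t) := by
    intro t ht
    have := hγprob t ht
    rw [← hγ₁ t ht, ← hγ₂ t ht]
    exact abs_popLoss_sub_le_integral_cost hρ hLip hℓ₁ hℓ₂ (γ t) (hint₁ t ht) (hint₂ t ht)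
      (hintc t ht)
  calc |popLoss ℓ h (μ 0) - popLoss ℓ h (μ T)|
      ≤ ∑ t ∈ Finset.range T, |popLoss ℓ h (μ t) - popLoss ℓ h (μ (t + 1))| := by
        simpa only [Real.dist_eq] using dist_le_range_sum_dist (fun t ↦ popLoss ℓ h (μ t)) T
    _ ≤ ∑ t ∈ Finset.range T,
          ρ * Real.sqrt (R ^ 2 + 1) * ∫ q, (‖q.1.1 - q.2.1‖ + |q.1.2 - q.2.2|) ∂(γ t) :=
        Finset.sum_le_sum fun t ht ↦ step t (Finset.mem_range.1 ht)
    _ = _ := (Finset.mul_sum _ _ _).symm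

/-- telescoped form of Lemma 4.1 along a path of domains μ₀, …, μ_T. -/
theorem error_difference_telescoped_along_path
    {d : ℕ} (T : ℕ) (hT : 1 ≤ T) (R ρ : ℝ) (hR : 0 ≤ R) (hρ : 0 ≤ ρ)
    (μ : ℕ → Measure (EuclideanSpace ℝ (Fin d) × ℝ))
    (hprob : ∀ t ≤ T, IsProbabilityMeasure (μ t))
    (h : EuclideanSpace ℝ (Fin d) → ℝ) (ℓ : ℝ → ℝ → ℝ)
    (hLip : ∀ x x' : EuclideanSpace ℝ (Fin d), |h x - h x'| ≤ R * ‖x - x'‖)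
    (hℓ₁ : ∀ y y' z : ℝ, |ℓ y z - ℓ y' z| ≤ ρ * |y - y'|)
    (hℓ₂ : ∀ y y' z : ℝ, |ℓ z y - ℓ z y'| ≤ ρ * |y - y'|)
    (γ : ℕ → Measure ((EuclideanSpace ℝ (Fin d) × ℝ) × (EuclideanSpace ℝ (Fin d) × ℝ)))
    (hγprob : ∀ t < T, IsProbabilityMeasure (γ t))
    (hγ₁ : ∀ t < T, (γ t).map Prod.fst = μ t)
    (hγ₂ : ∀ t < T, (γ t).map Prod.snd = μ (t + 1))
    (hint₁ : ∀ t < T, Integrable (fun q => ℓ (h q.1.1) q.1.2) (γ t))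
    (hint₂ : ∀ t < T, Integrable (fun q => ℓ (h q.2.1) q.2.2) (γ t))
    (hintc : ∀ t < T, Integrable (fun q => ‖q.1.1 - q.2.1‖ + |q.1.2 - q.2.2|) (γ t)) :
    |popLoss ℓ h (μ 0) - popLoss ℓ h (μ T)| ≤
      ρ * Real.sqrt (R ^ 2 + 1) *
        ∑ t ∈ Finset.range T, ∫ q, (‖q.1.1 - q.2.1‖ + |q.1.2 - q.2.2|) ∂(γ t) :=
  error_difference_telescoped_along_path_general T R ρ hρ μ h ℓ hLip hℓ₁ hℓ₂ γ hγprob hγ₁ hγ₂ hint₁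
    hint₂ hintc
end
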